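/- Suppose there exists an e-permutation P of (d, f) admitting a partition pair (S_D, S_F). Then there exists an e-permutation Q of (d, f) such that (S_D, S_F) is a partition pair for Q and Q is (S_D, S_F)-sorted. -/

import Mathlib

/-! Keep the partition `(SD, SF)` and only reorder values: put `d` on `SD` and `f` on `SF`, each in
increasing index order. Along `SD` the old values form a rearrangement `d ∘ σ` of the antitone
tuple `d`, and sorting a rearrangement decreasingly can only raise its sums over initial segments
(rearrangement inequality); the same holds along `SF`, so the new tuple still dominates `e`. For
the pointwise bounds, pigeonhole gives for the `t`-th element `i` of `SD` a later element `i'` of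
`SD` whose old value is at least `d t`, so `d t ≤ P i' ≤ e i' ≤ e i` because `e` is antitone. -/

/-- `P` dominates `Q`: every partial sum `∑_{i ≤ j} P i` is at least the
corresponding partial sum of `Q`, and the total sums agree. -/
def Dominates {n : ℕ} (P Q : Fin n → ℚ) : Prop :=
  (∀ j : Fin n, ∑ i ∈ Finset.Iic j, Q i ≤ ∑ i ∈ Finset.Iic j, P i) ∧
  (∑ i, P i = ∑ i, Q i)
/-- The multiset of values of a slope tuple. -/
def valMS {n : ℕ} (s : Fin n → ℚ) : Multiset ℚ :=
  Finset.univ.val.map s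

/-- `P` is an `e`-permutation of `(d, f)`. -/
def IsEPerm {m k : ℕ} (d : Fin m → ℚ) (f : Fin k → ℚ) (e P : Fin (m + k) → ℚ) : Prop :=
  valMS P = valMS d + valMS f ∧
  Dominates P e ∧
  ∀ i : Fin (m + k), (P i < e i → P i ∈ valMS d) ∧ (e i < P i → P i ∈ valMS f)

/-- `(SD, SF)` is a partition pair for the `e`-permutation `P` of `(d, f)`. -/
def IsPartitionPair {m k : ℕ} (d : Fin m → ℚ) (f : Fin k → ℚ) (e P : Fin (m + k) → ℚ)
    (SD SF : Finset (Fin (m + k))) : Prop :=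
  Disjoint SD SF ∧ SD ∪ SF = Finset.univ ∧
  SD.val.map P = valMS d ∧ (∀ i ∈ SD, P i ≤ e i) ∧
  SF.val.map P = valMS f ∧ (∀ j ∈ SF, e j ≤ P j)

/-- `P` is `(SD, SF)`-sorted: its values along `SD` (in increasing index order)
are exactly `d 0, …, d (m-1)`, and similarly for `SF` and `f`. -/
def IsSortedPair {m k : ℕ} (d : Fin m → ℚ) (f : Fin k → ℚ) (P : Fin (m + k) → ℚ)
    (SD SF : Finset (Fin (m + k))) : Prop :=
  ((SD.sort (· ≤ ·)).map P = List.ofFn d) ∧ ((SF.sort (· ≤ ·)).map P = List.ofFn f)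

open Finset

theorem exists_perm_eq_comp_of_map_univ_eq {ι β : Type*} [Fintype ι] [DecidableEq β]
    {x g : ι → β} (h : univ.val.map x = univ.val.map g) : ∃ σ : Equiv.Perm ι, x = g ∘ σ := by
  have hfiber : ∀ c, Fintype.card {a // x a = c} = Fintype.card {a // g a = c} := fun c => by
    simp only [Fintype.card_subtype, card_def, filter_val]
    simpa [Multiset.count_map, eq_comm] using congrArg (Multiset.count c) h
  exact ⟨Equiv.ofFiberEquiv fun c => Fintype.equivOfCardEq (hfiber c),
    funext fun a => (Equiv.ofFiberEquiv_map _ a).symm⟩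

section Rearrangement

variable {ι : Type*} [Fintype ι] [LinearOrder ι]

theorem Equiv.Perm.exists_ge_apply_le (σ : Equiv.Perm ι) (t : ι) : ∃ s, t ≤ s ∧ σ s ≤ t := by
  by_contra! hσ
  have hle := card_le_card_of_injOn σ (s := univ.filter (t ≤ ·)) (t := univ.filter (t < ·))
    (fun s hs => by simpa using hσ s (by simpa using hs)) σ.injective.injOn
  have hlt : univ.filter (t < ·) ⊂ univ.filter (t ≤ ·) :=
    ssubset_iff_of_subset (fun s hs => by simp_all [le_of_lt]) |>.2 ⟨t, by simp⟩
  exact (card_lt_card hlt).not_ge hle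

theorem Equiv.Perm.exists_le_le_apply (σ : Equiv.Perm ι) (t : ι) : ∃ s, s ≤ t ∧ t ≤ σ s :=
  Equiv.Perm.exists_ge_apply_le (ι := ιᵒᵈ) σ t

variable {α : Type*} [Preorder α] {g h : ι → α}

theorem Antitone.le_of_comp_perm_le (hg : Antitone g) (hh : Antitone h) (σ : Equiv.Perm ι)
    (hgh : ∀ s, g (σ s) ≤ h s) : g ≤ h := fun t => by
  obtain ⟨s, hts, hst⟩ := σ.exists_ge_apply_le t
  exact (hg hst).trans ((hgh s).trans (hh hts))

theorem Antitone.le_of_le_comp_perm (hg : Antitone g) (hh : Antitone h) (σ : Equiv.Perm ι)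
    (hhg : ∀ s, h s ≤ g (σ s)) : h ≤ g := fun t => by
  obtain ⟨s, hst, hts⟩ := σ.exists_le_le_apply t
  exact (hh hst).trans ((hhg s).trans (hg hts))

theorem Antitone.sum_comp_perm_le_of_isLowerSet {β : Type*} [AddCommMonoid β] [LinearOrder β]
    [IsOrderedCancelAddMonoid β] {g : ι → β} (hg : Antitone g) (σ : Equiv.Perm ι)
    {T : Finset ι} (hT : IsLowerSet (T : Set ι)) : ∑ i ∈ T, g (σ i) ≤ ∑ i ∈ T, g i := by
  let w : ι → ℕ := fun i => if i ∈ T then 1 else 0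
  have hw : Antitone w := fun i j hij => by
    by_cases hj : j ∈ T
    · have hi : i ∈ T := hT hij hj
      simp [w, hi, hj]
    · simp [w, hj]
  simpa [w, ite_smul, sum_ite_mem] using
    (hw.monovary hg).sum_smul_comp_perm_le_sum_smul (σ := σ)

end Rearrangement

section Partition

variable {ι β : Type*} [LinearOrder ι] {m k : ℕ} {S T : Finset ι}

theorem Finset.val_map_eq_map_univ_orderEmbOfFin (hS : #S = m) (F : ι → β) :
    S.val.map F = univ.val.map (F ∘ S.orderEmbOfFin hS) := by
  conv_lhs => rw [← S.map_orderEmbOfFin_univ hS]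
  rw [map_val, Multiset.map_map]
  rfl

theorem Finset.sort_map_eq_ofFn (hS : #S = m) (F : ι → β) :
    (S.sort (· ≤ ·)).map F = List.ofFn (F ∘ S.orderEmbOfFin hS) := by
  rw [← S.listMap_orderEmbOfFin_finRange hS, List.map_map, List.ofFn_eq_map]

variable [Fintype ι] (hST : Disjoint S T) (hU : S ∪ T = univ) (hS : #S = m) (hT : #T = k)

def partitionEquiv : Fin m ⊕ Fin k ≃ ι :=
  (Equiv.sumCongr (S.orderIsoOfFin hS).toEquiv (T.orderIsoOfFin hT).toEquiv).trans <|
    (Equiv.Finset.union S T hST).trans <| Equiv.subtypeUnivEquiv fun i => hU ▸ mem_univ i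

@[simp]
theorem partitionEquiv_inl (t : Fin m) :
    partitionEquiv hST hU hS hT (.inl t) = S.orderEmbOfFin hS t := rfl

@[simp]
theorem partitionEquiv_inr (t : Fin k) :
    partitionEquiv hST hU hS hT (.inr t) = T.orderEmbOfFin hT t := rfl

theorem sum_eq_sum_partitionEquiv [AddCommMonoid β] (F : ι → β) (A : Finset ι) :
    let ρ := partitionEquiv hST hU hS hT
    ∑ i ∈ A, F i = ∑ t with ρ (.inl t) ∈ A, F (ρ (.inl t)) +
      ∑ t with ρ (.inr t) ∈ A, F (ρ (.inr t)) := by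
  intro ρ
  calc ∑ i ∈ A, F i = ∑ i, if i ∈ A then F i else 0 := by
        rw [← sum_filter, filter_mem_eq_inter, univ_inter]
    _ = ∑ u, if ρ u ∈ A then F (ρ u) else 0 := (ρ.sum_comp fun i => if i ∈ A then F i else 0).symm
    _ = _ := by rw [Fintype.sum_sum_type, sum_filter, sum_filter]

def sortedFill (d : Fin m → β) (f : Fin k → β) : ι → β :=
  Sum.elim d f ∘ (partitionEquiv hST hU hS hT).symm

variable {hST hU hS hT} (d : Fin m → β) (f : Fin k → β)

@[simp]
theorem sortedFill_orderEmbOfFin_left (t : Fin m) :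
    sortedFill hST hU hS hT d f (S.orderEmbOfFin hS t) = d t := by
  rw [sortedFill, Function.comp_apply, ← partitionEquiv_inl hST hU hS hT,
    Equiv.symm_apply_apply, Sum.elim_inl]

@[simp]
theorem sortedFill_orderEmbOfFin_right (t : Fin k) :
    sortedFill hST hU hS hT d f (T.orderEmbOfFin hT t) = f t := by
  rw [sortedFill, Function.comp_apply, ← partitionEquiv_inr hST hU hS hT,
    Equiv.symm_apply_apply, Sum.elim_inr]

theorem val_map_sortedFill_left :
    S.val.map (sortedFill hST hU hS hT d f) = univ.val.map d := by
  rw [S.val_map_eq_map_univ_orderEmbOfFin hS]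
  congr 1
  ext t
  simp

theorem val_map_sortedFill_right :
    T.val.map (sortedFill hST hU hS hT d f) = univ.val.map f := by
  rw [T.val_map_eq_map_univ_orderEmbOfFin hT]
  congr 1
  ext t
  simp

theorem sort_map_sortedFill_left :
    (S.sort (· ≤ ·)).map (sortedFill hST hU hS hT d f) = List.ofFn d := by
  rw [S.sort_map_eq_ofFn hS]
  congr 1
  ext t
  simp

theorem sort_map_sortedFill_right :
    (T.sort (· ≤ ·)).map (sortedFill hST hU hS hT d f) = List.ofFn f := by
  rw [T.sort_map_eq_ofFn hT]
  congr 1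
  ext t
  simp

end Partition

theorem Dominates.trans {n : ℕ} {P Q R : Fin n → ℚ} (hPQ : Dominates P Q) (hQR : Dominates Q R) :
    Dominates P R :=
  ⟨fun j => (hQR.1 j).trans (hPQ.1 j), hPQ.2.trans hQR.2⟩

namespace IsPartitionPair

variable {m k : ℕ} {d : Fin m → ℚ} {f : Fin k → ℚ} {e P : Fin (m + k) → ℚ}
  {SD SF : Finset (Fin (m + k))}

theorem card_left (hP : IsPartitionPair d f e P SD SF) : #SD = m := by
  simpa [valMS] using congrArg Multiset.card hP.2.2.1

theorem card_right (hP : IsPartitionPair d f e P SD SF) : #SF = k := by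
  simpa [valMS] using congrArg Multiset.card hP.2.2.2.2.1

theorem valMS_eq (hP : IsPartitionPair d f e P SD SF) : valMS P = valMS d + valMS f := by
  have huniv : univ.val = SD.val + SF.val := by
    rw [← hP.2.1, ← disjUnion_eq_union _ _ hP.1]
    rfl
  rw [valMS, huniv, Multiset.map_add, hP.2.2.1, hP.2.2.2.2.1]

theorem isEPerm (hP : IsPartitionPair d f e P SD SF) (hdom : Dominates P e) : IsEPerm d f e P := by
  have hmem : ∀ i, i ∈ SD ∨ i ∈ SF := fun i => mem_union.1 (hP.2.1 ▸ mem_univ i)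
  refine ⟨hP.valMS_eq, hdom, fun i => ⟨fun hlt => ?_, fun hlt => ?_⟩⟩
  · have hi : i ∈ SD := (hmem i).resolve_right fun hi => (hP.2.2.2.2.2 i hi).not_gt hlt
    exact hP.2.2.1 ▸ Multiset.mem_map_of_mem P hi
  · have hi : i ∈ SF := (hmem i).resolve_left fun hi => (hP.2.2.2.1 i hi).not_gt hlt
    exact hP.2.2.2.2.1 ▸ Multiset.mem_map_of_mem P hi

theorem exists_perm_left (hP : IsPartitionPair d f e P SD SF) :
    ∃ σ : Equiv.Perm (Fin m), P ∘ SD.orderEmbOfFin hP.card_left = d ∘ σ :=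
  exists_perm_eq_comp_of_map_univ_eq <|
    (SD.val_map_eq_map_univ_orderEmbOfFin hP.card_left P).symm.trans hP.2.2.1

theorem exists_perm_right (hP : IsPartitionPair d f e P SD SF) :
    ∃ τ : Equiv.Perm (Fin k), P ∘ SF.orderEmbOfFin hP.card_right = f ∘ τ :=
  exists_perm_eq_comp_of_map_univ_eq <|
    (SF.val_map_eq_map_univ_orderEmbOfFin hP.card_right P).symm.trans hP.2.2.2.2.1

noncomputable def sorted (hP : IsPartitionPair d f e P SD SF) : Fin (m + k) → ℚ :=
  sortedFill hP.1 hP.2.1 hP.card_left hP.card_right d f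

theorem sorted_le_of_mem_left (hP : IsPartitionPair d f e P SD SF) (hd : Antitone d)
    (he : Antitone e) : ∀ i ∈ SD, hP.sorted i ≤ e i := by
  intro i hi
  obtain ⟨t, rfl⟩ : i ∈ Set.range (SD.orderEmbOfFin hP.card_left) := by
    rwa [range_orderEmbOfFin]
  obtain ⟨σ, hσ⟩ := hP.exists_perm_left
  rw [sorted, sortedFill_orderEmbOfFin_left]
  refine hd.le_of_comp_perm_le (he.comp_monotone (SD.orderEmbOfFin _).monotone) σ (fun s => ?_) t
  rw [← Function.comp_apply (f := d), ← hσ]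
  exact hP.2.2.2.1 _ (SD.orderEmbOfFin_mem _ s)

theorem le_sorted_of_mem_right (hP : IsPartitionPair d f e P SD SF) (hf : Antitone f)
    (he : Antitone e) : ∀ j ∈ SF, e j ≤ hP.sorted j := by
  intro j hj
  obtain ⟨t, rfl⟩ : j ∈ Set.range (SF.orderEmbOfFin hP.card_right) := by
    rwa [range_orderEmbOfFin]
  obtain ⟨τ, hτ⟩ := hP.exists_perm_right
  rw [sorted, sortedFill_orderEmbOfFin_right]
  refine hf.le_of_le_comp_perm (he.comp_monotone (SF.orderEmbOfFin _).monotone) τ (fun s => ?_) t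
  rw [← Function.comp_apply (f := f), ← hτ]
  exact hP.2.2.2.2.2 _ (SF.orderEmbOfFin_mem _ s)

theorem isPartitionPair_sorted (hP : IsPartitionPair d f e P SD SF) (hd : Antitone d)
    (hf : Antitone f) (he : Antitone e) : IsPartitionPair d f e hP.sorted SD SF :=
  ⟨hP.1, hP.2.1, val_map_sortedFill_left d f, hP.sorted_le_of_mem_left hd he,
    val_map_sortedFill_right d f, hP.le_sorted_of_mem_right hf he⟩

theorem isSortedPair_sorted (hP : IsPartitionPair d f e P SD SF) :
    IsSortedPair d f hP.sorted SD SF :=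
  ⟨sort_map_sortedFill_left d f, sort_map_sortedFill_right d f⟩

theorem sorted_dominates (hP : IsPartitionPair d f e P SD SF) (hd : Antitone d)
    (hf : Antitone f) : Dominates hP.sorted P := by
  obtain ⟨σ, hσ⟩ := hP.exists_perm_left
  obtain ⟨τ, hτ⟩ := hP.exists_perm_right
  set ιD := SD.orderEmbOfFin hP.card_left
  set ιF := SF.orderEmbOfFin hP.card_right
  have hsumP : ∀ A : Finset (Fin (m + k)),
      ∑ i ∈ A, P i = ∑ t with ιD t ∈ A, d (σ t) + ∑ t with ιF t ∈ A, f (τ t) := fun A => by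
    rw [sum_eq_sum_partitionEquiv hP.1 hP.2.1 hP.card_left hP.card_right]
    simp only [partitionEquiv_inl, partitionEquiv_inr, ← Function.comp_apply (f := P), hσ, hτ,
      ιD, ιF]
    rfl
  have hsumQ : ∀ A : Finset (Fin (m + k)),
      ∑ i ∈ A, hP.sorted i = ∑ t with ιD t ∈ A, d t + ∑ t with ιF t ∈ A, f t := fun A => by
    rw [sum_eq_sum_partitionEquiv hP.1 hP.2.1 hP.card_left hP.card_right]
    simp only [sorted, partitionEquiv_inl, partitionEquiv_inr, sortedFill_orderEmbOfFin_left,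
      sortedFill_orderEmbOfFin_right, ιD, ιF]
    rfl
  refine ⟨fun j => ?_, ?_⟩
  · have hlower : ∀ {n} (ι' : Fin n ↪o Fin (m + k)),
        IsLowerSet (↑({t | ι' t ∈ Iic j} : Finset (Fin n)) : Set (Fin n)) := fun {n} ι' => by
      rw [show (↑({t | ι' t ∈ Iic j} : Finset (Fin n)) : Set (Fin n)) = ι' ⁻¹' Set.Iic j by
        ext; simp]
      exact (isLowerSet_Iic j).preimage ι'.monotone
    rw [hsumP, hsumQ]
    exact add_le_add (hd.sum_comp_perm_le_of_isLowerSet σ (hlower ιD))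
      (hf.sum_comp_perm_le_of_isLowerSet τ (hlower ιF))
  · simp only [hsumP, hsumQ, mem_univ, filter_true, Equiv.sum_comp]

end IsPartitionPair

/-- Sorted-permutation lemma: if some `e`-permutation of `(d, f)` admits the partition
pair `(SD, SF)`, then there is an `e`-permutation `Q` of `(d, f)` admitting `(SD, SF)`
as a partition pair which is `(SD, SF)`-sorted. -/
theorem exists_sorted_ePerm {m k : ℕ} (d : Fin m → ℚ) (f : Fin k → ℚ)
    (e : Fin (m + k) → ℚ) (hd : Antitone d) (hf : Antitone f) (he : Antitone e)
    (SD SF : Finset (Fin (m + k)))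
    (h : ∃ P : Fin (m + k) → ℚ, IsEPerm d f e P ∧ IsPartitionPair d f e P SD SF) :
    ∃ Q : Fin (m + k) → ℚ, IsEPerm d f e Q ∧ IsPartitionPair d f e Q SD SF ∧
      IsSortedPair d f Q SD SF := by
  obtain ⟨P, ⟨-, hPe, -⟩, hP⟩ := h
  have hQ := hP.isPartitionPair_sorted hd hf he
  exact ⟨hP.sorted, hQ.isEPerm ((hP.sorted_dominates hd hf).trans hPe), hQ, hP.isSortedPair_sorted⟩
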